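/- Let X and Y be n×n positive semidefinite complex matrices, let a ≥ 0, and define g_a(x) = a·x + x²/(x+1) for x ≥ 0. Then for every index k, Σ_{j=1}^k λ_j↓(g_a(Y)) ≤ Σ_{j=1}^k λ_j↓(g_a(X + Y) − g_a(X)); that is, the eigenvalues of g_a(Y) are weakly majorised by the eigenvalues of g_a(X+Y) − g_a(X). -/

import Mathlib

/-!
Since `g_a(x) = (a + 1) x - (1 - (1 + x)⁻¹)`, one has `g_a(Y) = (a + 1) Y - (1 - (1 + Y)⁻¹)`
and `g_a(X + Y) - g_a(X) = (a + 1) Y - W` with `W = (1 + X)⁻¹ - (1 + X + Y)⁻¹`. For the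
contraction `C = (1 + X)^(-1/2)` one has `W = C (1 - (1 + C Y C)⁻¹) C`, so the min-max principle
for compressions gives `λ_j(W) ≤ 1 - (1 + λ_j(Y))⁻¹` for every `j`. Ky Fan's maximum principle,
evaluated in an eigenbasis of `Y`, turns these eigenvalue-wise bounds into the partial-sum
inequality.
-/

open Matrix
open scoped ComplexOrder

/-- The eigenvalues of a square matrix, sorted in non-increasing order
(junk value `0` if the matrix is not Hermitian). -/
noncomputable def eigValsDown {𝕜 : Type*} [RCLike 𝕜] {n : ℕ}
    (A : Matrix (Fin n) (Fin n) 𝕜) : Fin n → ℝ :=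
  if hA : A.IsHermitian then
    fun k => (hA.eigenvalues ∘ Tuple.sort hA.eigenvalues) k.rev
  else 0

/-- Functional calculus: apply a real function to a Hermitian matrix via its spectral
decomposition (junk value `0` if the matrix is not Hermitian). -/
noncomputable def matFun {𝕜 : Type*} [RCLike 𝕜] {n : ℕ} (h : ℝ → ℝ)
    (A : Matrix (Fin n) (Fin n) 𝕜) : Matrix (Fin n) (Fin n) 𝕜 :=
  if hA : A.IsHermitian then
    (hA.eigenvectorUnitary : Matrix (Fin n) (Fin n) 𝕜) *
      Matrix.diagonal (fun i => (h (hA.eigenvalues i) : 𝕜)) *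
      star (hA.eigenvectorUnitary : Matrix (Fin n) (Fin n) 𝕜)
  else 0

/-- The operator norm (largest singular value) of a matrix. -/
noncomputable def opNorm {𝕜 : Type*} [RCLike 𝕜] {n : ℕ}
    (A : Matrix (Fin n) (Fin n) 𝕜) : ℝ :=
  ‖Matrix.toEuclideanCLM (𝕜 := 𝕜) A‖

/-- The matrix absolute value `|M| = (Mᴴ M)^(1/2)`. -/
noncomputable def matAbs {𝕜 : Type*} [RCLike 𝕜] {n : ℕ}
    (A : Matrix (Fin n) (Fin n) 𝕜) : Matrix (Fin n) (Fin n) 𝕜 :=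
  let hA := (Matrix.posSemidef_conjTranspose_mul_self A).1
  (hA.eigenvectorUnitary : Matrix (Fin n) (Fin n) 𝕜) *
    Matrix.diagonal ((↑) ∘ Real.sqrt ∘ hA.eigenvalues) *
    (star hA.eigenvectorUnitary : Matrix (Fin n) (Fin n) 𝕜)

/-- The Ky Fan `k`-norm: the sum of the `k` largest singular values. -/
noncomputable def kyFanNorm {𝕜 : Type*} [RCLike 𝕜] {n : ℕ} (k : ℕ)
    (A : Matrix (Fin n) (Fin n) 𝕜) : ℝ :=
  ∑ j ∈ Finset.univ.filter (fun j : Fin n => (j : ℕ) < k), eigValsDown (matAbs A) j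

open scoped MatrixOrder

variable {𝕜 : Type*} [RCLike 𝕜] {n : ℕ}

namespace Matrix

section QuadraticForm

variable {m : Type*} [Fintype m]

open RCLike in
theorem re_star_dotProduct_self (x : m → 𝕜) : re (star x ⬝ᵥ x) = ∑ i, ‖x i‖ ^ 2 := by
  simp only [dotProduct, Pi.star_apply, RCLike.star_def, RCLike.conj_mul, map_sum]
  norm_cast

open RCLike in
theorem re_star_dotProduct_conj_diagonal_mulVec [DecidableEq m] (U : Matrix m m 𝕜)
    (d : m → ℝ) (x : m → 𝕜) :
    re (star x ⬝ᵥ (U * diagonal (fun i => (d i : 𝕜)) * star U) *ᵥ x) =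
      ∑ i, d i * ‖(star U *ᵥ x) i‖ ^ 2 := by
  rw [← mulVec_mulVec, ← mulVec_mulVec, dotProduct_mulVec, star_eq_conjTranspose,
    ← conjTranspose_conjTranspose U, ← star_mulVec, conjTranspose_conjTranspose]
  simp only [dotProduct, mulVec_diagonal, Pi.star_apply, RCLike.star_def, map_sum]
  refine Finset.sum_congr rfl fun i _ => ?_
  rw [mul_left_comm, RCLike.conj_mul, ← ofReal_pow, ← ofReal_mul, ofReal_re]

theorem sum_norm_sq_star_mulVec [DecidableEq m] {U : Matrix m m 𝕜}
    (hU : U ∈ unitaryGroup m 𝕜) (x : m → 𝕜) :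
    ∑ i, ‖(star U *ᵥ x) i‖ ^ 2 = ∑ i, ‖x i‖ ^ 2 := by
  have h := re_star_dotProduct_conj_diagonal_mulVec U (fun _ => 1) x
  simp only [RCLike.ofReal_one, diagonal_one, mul_one, Unitary.mul_star_self_of_mem hU,
    one_mulVec, one_mul, re_star_dotProduct_self] at h
  exact h.symm

theorem star_dotProduct_conjTranspose_mul_mul_mulVec (G B : Matrix m m 𝕜) (x : m → 𝕜) :
    star x ⬝ᵥ (Gᴴ * B * G) *ᵥ x = star (G *ᵥ x) ⬝ᵥ B *ᵥ (G *ᵥ x) := by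
  rw [← mulVec_mulVec, ← mulVec_mulVec, dotProduct_mulVec, star_mulVec]

theorem sum_norm_sq_mulVec_le [DecidableEq m] {G : Matrix m m 𝕜}
    (hG : (1 - Gᴴ * G).PosSemidef) (x : m → 𝕜) :
    ∑ i, ‖(G *ᵥ x) i‖ ^ 2 ≤ ∑ i, ‖x i‖ ^ 2 := by
  have h := RCLike.nonneg_iff.mp (hG.dotProduct_mulVec_nonneg x) |>.1
  rw [sub_mulVec, one_mulVec, dotProduct_sub, map_sub, re_star_dotProduct_self,
    ← mul_one Gᴴ, star_dotProduct_conjTranspose_mul_mul_mulVec, one_mulVec,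
    re_star_dotProduct_self] at h
  linarith

theorem sum_norm_sq_row_eq_one [DecidableEq m] {Q : Matrix m m 𝕜}
    (hQ : Q ∈ unitaryGroup m 𝕜) (i : m) : ∑ j, ‖Q i j‖ ^ 2 = 1 := by
  have h := congrFun (congrFun (mem_unitaryGroup_iff.mp hQ) i) i
  simp only [mul_apply, one_apply_eq, star_apply, RCLike.star_def, RCLike.mul_conj] at h
  exact_mod_cast h

theorem sum_norm_sq_col_eq_one [DecidableEq m] {Q : Matrix m m 𝕜}
    (hQ : Q ∈ unitaryGroup m 𝕜) (j : m) : ∑ i, ‖Q i j‖ ^ 2 = 1 := by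
  have h := congrFun (congrFun (mem_unitaryGroup_iff'.mp hQ) j) j
  simp only [mul_apply, one_apply_eq, star_apply, RCLike.star_def, RCLike.conj_mul] at h
  exact_mod_cast h

end QuadraticForm

end Matrix

section Rearrangement

variable {ι : Type*} [Fintype ι] {l w : ι → ℝ}

theorem Antitone.apply_mul_sum_le_sum_mul [LinearOrder ι] (hl : Antitone l) (hw : 0 ≤ w)
    {j : ι} (hwj : ∀ i, j < i → w i = 0) : l j * ∑ i, w i ≤ ∑ i, l i * w i := by
  rw [Finset.mul_sum]
  refine Finset.sum_le_sum fun i _ => ?_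
  rcases le_or_gt i j with hij | hij
  · exact mul_le_mul_of_nonneg_right (hl hij) (hw i)
  · simp [hwj i hij]

theorem Antitone.sum_mul_le_apply_mul_sum [LinearOrder ι] (hl : Antitone l) (hw : 0 ≤ w)
    {j : ι} (hwj : ∀ i < j, w i = 0) : ∑ i, l i * w i ≤ l j * ∑ i, w i := by
  rw [Finset.mul_sum]
  refine Finset.sum_le_sum fun i _ => ?_
  rcases lt_or_ge i j with hij | hij
  · simp [hwj i hij]
  · exact mul_le_mul_of_nonneg_right (hl hij) (hw i)

theorem sum_mul_le_sum_of_threshold [DecidableEq ι] (S : Finset ι) (p : ℝ)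
    (hS : ∀ i ∈ S, p ≤ l i) (hSc : ∀ i ∉ S, l i ≤ p) (hw0 : ∀ i, 0 ≤ w i)
    (hw1 : ∀ i, w i ≤ 1) (hw : ∑ i, w i = S.card) :
    ∑ i, l i * w i ≤ ∑ i ∈ S, l i := by
  have key : ∀ i,
      l i * w i ≤ (if i ∈ S then l i else 0) + p * (w i - if i ∈ S then 1 else 0) := by
    intro i
    split_ifs with hi
    · nlinarith [hS i hi, hw1 i]
    · nlinarith [hSc i hi, hw0 i]
  calc ∑ i, l i * w i
      ≤ ∑ i, ((if i ∈ S then l i else 0) + p * (w i - if i ∈ S then 1 else 0)) :=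
        Finset.sum_le_sum fun i _ => key i
    _ = ∑ i ∈ S, l i := by
        simp [Finset.sum_add_distrib, ← Finset.mul_sum, Finset.sum_sub_distrib, hw]

end Rearrangement

theorem Antitone.sum_mul_le_sum_filter_lt {l w : Fin n → ℝ} (hl : Antitone l)
    (hw0 : ∀ i, 0 ≤ w i) (hw1 : ∀ i, w i ≤ 1) (k : ℕ)
    (hw : ∑ i, w i = (Finset.univ.filter (fun j : Fin n => (j : ℕ) < k)).card) :
    ∑ i, l i * w i ≤ ∑ i ∈ Finset.univ.filter (fun j : Fin n => (j : ℕ) < k), l i := by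
  by_cases hk : k < n
  · refine sum_mul_le_sum_of_threshold _ (l ⟨k, hk⟩) (fun i hi => hl ?_) (fun i hi => hl ?_)
      hw0 hw1 hw
    · simp only [Finset.mem_filter] at hi
      exact Fin.mk_le_of_le_val hi.2.le
    · simp only [Finset.mem_filter, Finset.mem_univ, true_and, not_lt] at hi
      exact Fin.mk_le_of_le_val hi
  · obtain ⟨p, hp⟩ := (Set.finite_range l).bddBelow
    refine sum_mul_le_sum_of_threshold _ p (fun i _ => hp ⟨i, rfl⟩) (fun i hi => ?_) hw0 hw1 hw
    simp only [Finset.mem_filter, Finset.mem_univ, true_and] at hi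
    omega

theorem Matrix.exists_ne_zero_vanishing_above_mulVec_vanishing_below {K : Type*} [Field K]
    (M : Matrix (Fin n) (Fin n) K) (j : Fin n) :
    ∃ c ≠ 0, (∀ i, j < i → c i = 0) ∧ ∀ i < j, (M *ᵥ c) i = 0 := by
  let F : (Fin n → K) →ₗ[K] Fin n → K := LinearMap.pi fun i =>
    if j < i then LinearMap.proj i else if i < j then LinearMap.proj i ∘ₗ M.mulVecLin else 0
  -- `ker F` is the space sought; every value of `F` vanishes at `j`, so `F` is not surjective
  have hF : ¬ Function.Surjective F := fun h => by
    obtain ⟨c, hc⟩ := h (Pi.single j 1)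
    simpa [F] using congrFun hc j
  have hker : LinearMap.ker F ≠ ⊥ := fun h =>
    hF (LinearMap.injective_iff_surjective.mp (LinearMap.ker_eq_bot.mp h))
  obtain ⟨c, hc, hc0⟩ := Submodule.exists_mem_ne_zero_of_ne_bot hker
  refine ⟨c, hc0, fun i hi => ?_, fun i hi => ?_⟩
  · simpa [F, hi] using congrFun hc i
  · simpa [F, hi, hi.not_gt] using congrFun hc i

namespace Matrix.IsHermitian

variable {A : Matrix (Fin n) (Fin n) 𝕜} (hA : A.IsHermitian)
include hA

theorem eigValsDown_eq_comp :
    eigValsDown A = hA.eigenvalues ∘ Fin.revPerm.trans (Tuple.sort hA.eigenvalues) := by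
  funext k
  rw [eigValsDown, dif_pos hA]
  rfl

theorem eigValsDown_antitone : Antitone (eigValsDown A) := by
  intro i j hij
  rw [hA.eigValsDown_eq_comp]
  exact Tuple.monotone_sort hA.eigenvalues (Fin.rev_le_rev.mpr hij)

theorem exists_unitary_forall_cfc_eq :
    ∃ U ∈ unitaryGroup (Fin n) 𝕜, ∀ h : ℝ → ℝ,
      cfc h A = U * diagonal (fun i => (h (eigValsDown A i) : 𝕜)) * star U := by
  set τ := Fin.revPerm.trans (Tuple.sort hA.eigenvalues)
  set U₀ : Matrix (Fin n) (Fin n) 𝕜 := (hA.eigenvectorUnitary : Matrix (Fin n) (Fin n) 𝕜)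
  have hstar : star (U₀.submatrix id τ) = (star U₀).submatrix τ id :=
    conjTranspose_submatrix ..
  refine ⟨U₀.submatrix id τ, ?_, fun h => ?_⟩
  · rw [mem_unitaryGroup_iff, hstar, submatrix_mul_equiv, submatrix_id_id,
      ← mem_unitaryGroup_iff]
    exact hA.eigenvectorUnitary.2
  · have hdiag : diagonal (fun i => (h (eigValsDown A i) : 𝕜)) =
        (diagonal (RCLike.ofReal ∘ h ∘ hA.eigenvalues)).submatrix τ τ := by
      rw [submatrix_diagonal_equiv, hA.eigValsDown_eq_comp]
      rfl
    rw [hdiag, hstar, submatrix_mul_equiv, submatrix_mul_equiv, submatrix_id_id, hA.cfc_eq,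
      IsHermitian.cfc, Unitary.conjStarAlgAut_apply]

theorem exists_unitary_eq_conj_diagonal :
    ∃ U ∈ unitaryGroup (Fin n) 𝕜,
      A = U * diagonal (fun i => (eigValsDown A i : 𝕜)) * star U := by
  obtain ⟨U, hU, hcfc⟩ := hA.exists_unitary_forall_cfc_eq
  exact ⟨U, hU, (cfc_id ℝ A hA.isSelfAdjoint).symm.trans (hcfc id)⟩

theorem cfc_one_add : cfc (fun x : ℝ => 1 + x) A = 1 + A := by
  rw [cfc_const_add 1 _ A (A.finite_real_spectrum.continuousOn _) hA.isSelfAdjoint,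
    cfc_id' ℝ A, map_one]

end Matrix.IsHermitian

theorem matFun_eq_cfc {A : Matrix (Fin n) (Fin n) 𝕜} (hA : A.IsHermitian) (h : ℝ → ℝ) :
    matFun h A = cfc h A := by
  rw [matFun, dif_pos hA, hA.cfc_eq, IsHermitian.cfc, Unitary.conjStarAlgAut_apply]
  rfl

theorem Matrix.PosSemidef.eigValsDown_nonneg {A : Matrix (Fin n) (Fin n) 𝕜}
    (hA : A.PosSemidef) : 0 ≤ eigValsDown A := by
  intro i
  rw [hA.1.eigValsDown_eq_comp]
  exact hA.eigenvalues_nonneg _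

theorem eigValsDown_le_of_eq_conjTranspose_mul_mul {A G V : Matrix (Fin n) (Fin n) 𝕜}
    (hA : A.IsHermitian) (hG : (1 - Gᴴ * G).PosSemidef) (hV : V ∈ unitaryGroup (Fin n) 𝕜)
    {e : Fin n → ℝ} (he : Antitone e) (he0 : 0 ≤ e)
    (hAe : A = Gᴴ * (V * diagonal (fun i => (e i : 𝕜)) * star V) * G) (j : Fin n) :
    eigValsDown A j ≤ e j := by
  obtain ⟨U, hU, hAU⟩ := hA.exists_unitary_eq_conj_diagonal
  -- `x = U c` lies in the span of the top `j + 1` eigenvectors of `A`, while `G x` lies in the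
  -- span of the eigenvectors of `V diag(e) V*` for `e j, e (j + 1), …`
  obtain ⟨c, hc0, hc_top, hc_bot⟩ :=
    (star V * G * U).exists_ne_zero_vanishing_above_mulVec_vanishing_below j
  set x := U *ᵥ c
  have hUx : star U *ᵥ x = c := by
    rw [mulVec_mulVec, Unitary.star_mul_self_of_mem hU, one_mulVec]
  have hVGx : star V *ᵥ (G *ᵥ x) = (star V * G * U) *ᵥ c := by
    simp only [x, mulVec_mulVec, mul_assoc]
  have hc : 0 < ∑ i, ‖c i‖ ^ 2 := by
    obtain ⟨i, hi⟩ := Function.ne_iff.mp hc0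
    exact Finset.sum_pos' (fun i _ => by positivity)
      ⟨i, Finset.mem_univ _, pow_pos (norm_pos_iff.mpr hi) 2⟩
  have hxc : ∑ i, ‖x i‖ ^ 2 = ∑ i, ‖c i‖ ^ 2 := by
    rw [← hUx, sum_norm_sq_star_mulVec hU]
  refine le_of_mul_le_mul_right ?_ hc
  calc eigValsDown A j * ∑ i, ‖c i‖ ^ 2
      ≤ ∑ i, eigValsDown A i * ‖c i‖ ^ 2 :=
        hA.eigValsDown_antitone.apply_mul_sum_le_sum_mul (fun _ => by positivity)
          fun i hi => by simp [hc_top i hi]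
    _ = RCLike.re (star x ⬝ᵥ A *ᵥ x) := by
        rw [hAU, re_star_dotProduct_conj_diagonal_mulVec, ← hAU, hUx]
    _ = ∑ i, e i * ‖(star V *ᵥ (G *ᵥ x)) i‖ ^ 2 := by
        rw [hAe, star_dotProduct_conjTranspose_mul_mul_mulVec,
          re_star_dotProduct_conj_diagonal_mulVec]
    _ ≤ e j * ∑ i, ‖(star V *ᵥ (G *ᵥ x)) i‖ ^ 2 :=
        he.sum_mul_le_apply_mul_sum (fun _ => by positivity)
          fun i hi => by simp [hVGx, hc_bot i hi]
    _ ≤ e j * ∑ i, ‖c i‖ ^ 2 := by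
        rw [sum_norm_sq_star_mulVec hV, ← hxc]
        exact mul_le_mul_of_nonneg_left (sum_norm_sq_mulVec_le hG x) (he0 j)

namespace Matrix.PosSemidef

theorem eigValsDown_conjTranspose_mul_mul_le {B G : Matrix (Fin n) (Fin n) 𝕜}
    (hB : B.PosSemidef) (hG : (1 - Gᴴ * G).PosSemidef) (j : Fin n) :
    eigValsDown (Gᴴ * B * G) j ≤ eigValsDown B j := by
  obtain ⟨V, hV, hBV⟩ := hB.1.exists_unitary_eq_conj_diagonal
  exact eigValsDown_le_of_eq_conjTranspose_mul_mul (hB.conjTranspose_mul_mul_same G).1 hG hV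
    hB.1.eigValsDown_antitone hB.eigValsDown_nonneg (by rw [← hBV]) j

theorem eigValsDown_cfc_le {A : Matrix (Fin n) (Fin n) 𝕜} (hA : A.PosSemidef) {h : ℝ → ℝ}
    (hmono : MonotoneOn h (Set.Ici 0)) (hnonneg : ∀ x, 0 ≤ x → 0 ≤ h x) (j : Fin n) :
    eigValsDown (cfc h A) j ≤ h (eigValsDown A j) := by
  obtain ⟨U, hU, hcfc⟩ := hA.1.exists_unitary_forall_cfc_eq
  have hev := hA.eigValsDown_nonneg
  exact eigValsDown_le_of_eq_conjTranspose_mul_mul (G := 1) (cfc_predicate h A)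
    (by simpa using PosSemidef.zero) hU
    (fun i i' hii' => hmono (hev i') (hev i) (hA.1.eigValsDown_antitone hii'))
    (fun i => hnonneg _ (hev i)) (by simpa using hcfc h) j

end Matrix.PosSemidef

theorem Matrix.IsHermitian.sum_re_diag_le_sum_eigValsDown {H V : Matrix (Fin n) (Fin n) 𝕜}
    (hH : H.IsHermitian) (hV : V ∈ unitaryGroup (Fin n) 𝕜) (k : ℕ) :
    ∑ j ∈ Finset.univ.filter (fun j : Fin n => (j : ℕ) < k),
        RCLike.re ((star V * H * V) j j) ≤
      ∑ j ∈ Finset.univ.filter (fun j : Fin n => (j : ℕ) < k), eigValsDown H j := by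
  set S := Finset.univ.filter (fun j : Fin n => (j : ℕ) < k)
  obtain ⟨U, hU, hHU⟩ := hH.exists_unitary_eq_conj_diagonal
  -- the weights `‖Q i j‖ ^ 2` form a doubly stochastic matrix
  set Q := star U * V
  have hQ : Q ∈ unitaryGroup (Fin n) 𝕜 := mul_mem (Unitary.star_mem hU) hV
  have hdiag : ∀ j,
      RCLike.re ((star V * H * V) j j) = ∑ i, eigValsDown H i * ‖Q i j‖ ^ 2 := by
    intro j
    have hVHV : star V * H * V = star Q * diagonal (fun i => (eigValsDown H i : 𝕜)) * Q := by
      conv_lhs => rw [hHU]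
      simp only [Q, star_mul, star_star, mul_assoc]
    rw [hVHV, mul_apply, map_sum]
    refine Finset.sum_congr rfl fun i _ => ?_
    rw [mul_diagonal, star_apply, RCLike.star_def, mul_right_comm, RCLike.conj_mul,
      ← RCLike.ofReal_pow, ← RCLike.ofReal_mul, RCLike.ofReal_re, mul_comm]
  calc ∑ j ∈ S, RCLike.re ((star V * H * V) j j)
      = ∑ i, eigValsDown H i * ∑ j ∈ S, ‖Q i j‖ ^ 2 := by
        simp only [hdiag, Finset.mul_sum]
        exact Finset.sum_comm
    _ ≤ ∑ j ∈ S, eigValsDown H j := by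
        refine hH.eigValsDown_antitone.sum_mul_le_sum_filter_lt (fun i => by positivity)
          (fun i => ?_) k ?_
        · rw [← sum_norm_sq_row_eq_one hQ i]
          exact Finset.sum_le_sum_of_subset_of_nonneg (Finset.subset_univ S) fun _ _ _ => by
            positivity
        · rw [Finset.sum_comm, Finset.sum_congr rfl fun j _ => sum_norm_sq_col_eq_one hQ j,
            Finset.sum_const, nsmul_eq_mul, mul_one]

theorem Matrix.IsHermitian.sum_sub_sum_eigValsDown_le {B V : Matrix (Fin n) (Fin n) 𝕜}
    (hB : B.IsHermitian) (hV : V ∈ unitaryGroup (Fin n) 𝕜) (d : Fin n → ℝ) (k : ℕ) :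
    ∑ j ∈ Finset.univ.filter (fun j : Fin n => (j : ℕ) < k), d j -
        ∑ j ∈ Finset.univ.filter (fun j : Fin n => (j : ℕ) < k), eigValsDown B j ≤
      ∑ j ∈ Finset.univ.filter (fun j : Fin n => (j : ℕ) < k),
        eigValsDown (V * diagonal (fun i => (d i : 𝕜)) * star V - B) j := by
  set D := diagonal (fun i => (d i : 𝕜))
  have hVDV : star V * (V * D * star V - B) * V = D - star V * B * V := by
    simp only [mul_sub, sub_mul, ← mul_assoc, Unitary.star_mul_self_of_mem hV, one_mul]
    simp only [mul_assoc, Unitary.star_mul_self_of_mem hV, mul_one]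
  have hD : D.IsHermitian := isHermitian_diagonal_iff.mpr fun i => RCLike.conj_ofReal (d i)
  have hA : (V * D * star V - B).IsHermitian := (isHermitian_mul_mul_conjTranspose V hD).sub hB
  refine le_trans ?_ (hA.sum_re_diag_le_sum_eigValsDown hV k)
  simp only [hVDV, Matrix.sub_apply, D, diagonal_apply_eq, map_sub, RCLike.ofReal_re,
    Finset.sum_sub_distrib]
  exact sub_le_sub_left (hB.sum_re_diag_le_sum_eigValsDown hV k) _

namespace Matrix.PosSemidef

variable {A : Matrix (Fin n) (Fin n) 𝕜} (hA : A.PosSemidef)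
include hA

theorem cfc_one_add_inv : cfc (fun x : ℝ => (1 + x)⁻¹) A = (1 + A)⁻¹ := by
  rw [cfc_inv (1 + ·) A (fun x hx => by linarith [spectrum_nonneg_of_nonneg hA.nonneg hx])
      (A.finite_real_spectrum.continuousOn _) hA.1.isSelfAdjoint, hA.1.cfc_one_add,
    nonsing_inv_eq_ringInverse]

theorem cfc_one_sub_one_add_inv : cfc (fun x : ℝ => 1 - (1 + x)⁻¹) A = 1 - (1 + A)⁻¹ := by
  rw [cfc_sub (fun _ => 1) _ A (A.finite_real_spectrum.continuousOn _)
      (A.finite_real_spectrum.continuousOn _), cfc_const 1 A hA.1.isSelfAdjoint,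
    hA.cfc_one_add_inv, map_one]

theorem one_sub_one_add_inv : (1 - (1 + A)⁻¹).PosSemidef := by
  rw [← hA.cfc_one_sub_one_add_inv]
  refine LE.le.posSemidef (cfc_nonneg fun x hx => ?_)
  have hx := spectrum_nonneg_of_nonneg hA.nonneg hx
  exact sub_nonneg.mpr (inv_le_one_of_one_le₀ (by linarith))

end Matrix.PosSemidef

theorem monotoneOn_one_sub_one_add_inv : MonotoneOn (fun x : ℝ => 1 - (1 + x)⁻¹) (Set.Ici 0) :=
  fun x (hx : 0 ≤ x) _ _ hxy => sub_le_sub_left (inv_anti₀ (by linarith) (by linarith)) 1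

theorem Matrix.PosSemidef.exists_sqrt_one_add {X : Matrix (Fin n) (Fin n) 𝕜}
    (hX : X.PosSemidef) : ∃ S C : Matrix (Fin n) (Fin n) 𝕜,
      Cᴴ = C ∧ S * S = 1 + X ∧ C * C = (1 + X)⁻¹ ∧ S * C = 1 ∧ C * S = 1 := by
  have hc := fun f : ℝ → ℝ => X.finite_real_spectrum.continuousOn f
  have hX1 : ∀ x ∈ spectrum ℝ X, 0 < 1 + x := fun x hx => by
    linarith [spectrum_nonneg_of_nonneg hX.nonneg hx]
  refine ⟨cfc (fun x : ℝ => √(1 + x)) X, cfc (fun x : ℝ => (√(1 + x))⁻¹) X,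
    (cfc_predicate _ X : IsSelfAdjoint _), ?_, ?_, ?_, ?_⟩ <;>
    rw [← cfc_mul _ _ X (hc _) (hc _)]
  · rw [← hX.1.cfc_one_add]
    exact cfc_congr fun x hx => Real.mul_self_sqrt (hX1 x hx).le
  · rw [← hX.cfc_one_add_inv]
    exact cfc_congr fun x hx => by rw [← mul_inv, Real.mul_self_sqrt (hX1 x hx).le]
  · rw [← cfc_one ℝ X]
    exact cfc_congr fun x hx => mul_inv_cancel₀ (by have := hX1 x hx; positivity)
  · rw [← cfc_one ℝ X]
    exact cfc_congr fun x hx => inv_mul_cancel₀ (by have := hX1 x hx; positivity)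

theorem Matrix.inv_add_eq_mul_inv_one_add_mul_mul {m R : Type*} [Fintype m] [DecidableEq m]
    [CommRing R] {P Y S C : Matrix m m R} (hSS : S * S = P) (hSC : S * C = 1) (hCS : C * S = 1)
    (hunit : IsUnit (1 + C * Y * C).det) : (P + Y)⁻¹ = C * (1 + C * Y * C)⁻¹ * C := by
  have hsum : P + Y = S * (1 + C * Y * C) * S := by
    simp only [mul_add, add_mul, mul_one, hSS, ← mul_assoc, hSC, one_mul]
    simp only [mul_assoc, hCS, mul_one]
  refine inv_eq_right_inv ?_
  calc (P + Y) * (C * (1 + C * Y * C)⁻¹ * C)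
      = S * ((1 + C * Y * C) * (S * C) * (1 + C * Y * C)⁻¹) * C := by
        rw [hsum]
        simp only [mul_assoc]
    _ = 1 := by rw [hSC, mul_one, mul_nonsing_inv _ hunit, mul_one, hSC]

theorem Matrix.PosSemidef.eigValsDown_inv_one_add_sub_inv_le {X Y : Matrix (Fin n) (Fin n) 𝕜}
    (hX : X.PosSemidef) (hY : Y.PosSemidef) (j : Fin n) :
    eigValsDown ((1 + X)⁻¹ - (1 + X + Y)⁻¹) j ≤ 1 - (1 + eigValsDown Y j)⁻¹ := by
  obtain ⟨S, C, hC, hSS, hCC, hSC, hCS⟩ := hX.exists_sqrt_one_add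
  have hG : (1 - Cᴴ * C).PosSemidef := by
    rw [hC, hCC]
    exact hX.one_sub_one_add_inv
  set Z := C * Y * C
  have hZ : Z.PosSemidef := by simpa only [hC] using hY.conjTranspose_mul_mul_same C
  have hunit : IsUnit (1 + Z).det :=
    (isUnit_iff_isUnit_det _).mp (PosDef.one.add_posSemidef hZ).isUnit
  have hW : (1 + X)⁻¹ - (1 + X + Y)⁻¹ = Cᴴ * (1 - (1 + Z)⁻¹) * C := by
    rw [inv_add_eq_mul_inv_one_add_mul_mul hSS hSC hCS hunit, ← hCC, hC, mul_sub, sub_mul,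
      mul_one]
  rw [hW]
  calc eigValsDown (Cᴴ * (1 - (1 + Z)⁻¹) * C) j
      ≤ eigValsDown (1 - (1 + Z)⁻¹) j :=
        hZ.one_sub_one_add_inv.eigValsDown_conjTranspose_mul_mul_le hG j
    _ ≤ 1 - (1 + eigValsDown Z j)⁻¹ := by
        rw [← hZ.cfc_one_sub_one_add_inv]
        exact hZ.eigValsDown_cfc_le monotoneOn_one_sub_one_add_inv
          (fun x hx => sub_nonneg.mpr (inv_le_one_of_one_le₀ (by linarith))) j
    _ ≤ 1 - (1 + eigValsDown Y j)⁻¹ :=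
        monotoneOn_one_sub_one_add_inv (hZ.eigValsDown_nonneg j) (hY.eigValsDown_nonneg j)
          (by simpa only [hC] using hY.eigValsDown_conjTranspose_mul_mul_le hG j)

section ScalarFunction

variable {a : ℝ}

theorem mul_add_sq_div_eq {x : ℝ} (hx : 0 ≤ x) :
    a * x + x ^ 2 / (x + 1) = (a + 1) * x - (1 - (1 + x)⁻¹) := by
  field_simp
  ring

theorem mul_add_sq_div_nonneg (ha : 0 ≤ a) {x : ℝ} (hx : 0 ≤ x) :
    0 ≤ a * x + x ^ 2 / (x + 1) :=
  add_nonneg (mul_nonneg ha hx) (div_nonneg (sq_nonneg x) (by linarith))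

theorem monotoneOn_mul_add_sq_div (ha : 0 ≤ a) :
    MonotoneOn (fun x : ℝ => a * x + x ^ 2 / (x + 1)) (Set.Ici 0) := by
  intro x (hx : 0 ≤ x) y (hy : 0 ≤ y) hxy
  have hsq : x ^ 2 / (x + 1) ≤ y ^ 2 / (y + 1) := by
    rw [div_le_div_iff₀ (by linarith) (by linarith)]
    nlinarith [mul_nonneg (mul_nonneg hx hy) (sub_nonneg.mpr hxy)]
  exact add_le_add (mul_le_mul_of_nonneg_left hxy ha) hsq

end ScalarFunction

theorem Matrix.PosSemidef.cfc_mul_add_sq_div {M : Matrix (Fin n) (Fin n) 𝕜} (hM : M.PosSemidef)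
    (a : ℝ) : cfc (fun x => a * x + x ^ 2 / (x + 1)) M = (a + 1) • M - (1 - (1 + M)⁻¹) := by
  rw [← hM.cfc_one_sub_one_add_inv, ← cfc_const_mul_id (a + 1) M hM.1.isSelfAdjoint,
    ← cfc_sub _ _ M (M.finite_real_spectrum.continuousOn _)
      (M.finite_real_spectrum.continuousOn _)]
  exact cfc_congr fun x hx => mul_add_sq_div_eq (spectrum_nonneg_of_nonneg hM.nonneg hx)

theorem Matrix.PosSemidef.matFun_mul_add_sq_div_add_sub {X Y : Matrix (Fin n) (Fin n) 𝕜}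
    (hX : X.PosSemidef) (hY : Y.PosSemidef) (a : ℝ) :
    matFun (fun x => a * x + x ^ 2 / (x + 1)) (X + Y) -
        matFun (fun x => a * x + x ^ 2 / (x + 1)) X =
      (a + 1) • Y - ((1 + X)⁻¹ - (1 + X + Y)⁻¹) := by
  rw [matFun_eq_cfc (hX.add hY).1, matFun_eq_cfc hX.1, (hX.add hY).cfc_mul_add_sq_div,
    hX.cfc_mul_add_sq_div, smul_add, ← add_assoc]
  abel

/-- Proposition `prop:g`: for PSD `X, Y`, `a ≥ 0` and
`g_a(x) = a·x + x²/(x+1)`, the eigenvalues of `g_a(Y)` are weakly majorised by those of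
`g_a(X + Y) - g_a(X)`. -/
theorem stmt9 {n : ℕ} (X Y : Matrix (Fin n) (Fin n) ℂ)
    (hX : X.PosSemidef) (hY : Y.PosSemidef) (a : ℝ) (ha : 0 ≤ a) (k : ℕ) :
    ∑ j ∈ Finset.univ.filter (fun j : Fin n => (j : ℕ) < k),
        eigValsDown (matFun (fun x => a * x + x ^ 2 / (x + 1)) Y) j ≤
      ∑ j ∈ Finset.univ.filter (fun j : Fin n => (j : ℕ) < k),
        eigValsDown (matFun (fun x => a * x + x ^ 2 / (x + 1)) (X + Y) -
          matFun (fun x => a * x + x ^ 2 / (x + 1)) X) j := by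
  set S := Finset.univ.filter (fun j : Fin n => (j : ℕ) < k)
  set W := (1 + X)⁻¹ - (1 + X + Y)⁻¹
  have hW : W.IsHermitian :=
    (isHermitian_one.add hX.1).inv.sub ((isHermitian_one.add hX.1).add hY.1).inv
  obtain ⟨V, hV, hYV⟩ := hY.1.exists_unitary_forall_cfc_eq
  set μ := eigValsDown Y
  have hVY : (a + 1) • Y = V * diagonal (fun i => (((a + 1) * μ i : ℝ) : ℂ)) * star V := by
    rw [← cfc_const_mul_id (a + 1) Y hY.1.isSelfAdjoint]
    exact hYV _
  calc ∑ j ∈ S, eigValsDown (matFun (fun x => a * x + x ^ 2 / (x + 1)) Y) j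
      ≤ ∑ j ∈ S, ((a + 1) * μ j - (1 - (1 + μ j)⁻¹)) := by
        refine Finset.sum_le_sum fun j _ => ?_
        rw [matFun_eq_cfc hY.1, ← mul_add_sq_div_eq (hY.eigValsDown_nonneg j)]
        exact hY.eigValsDown_cfc_le (monotoneOn_mul_add_sq_div ha)
          (fun x => mul_add_sq_div_nonneg ha) j
    _ ≤ ∑ j ∈ S, (a + 1) * μ j - ∑ j ∈ S, eigValsDown W j := by
        rw [← Finset.sum_sub_distrib]
        gcongr with j
        exact hX.eigValsDown_inv_one_add_sub_inv_le hY j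
    _ ≤ _ := by
        rw [hX.matFun_mul_add_sq_div_add_sub hY, hVY]
        exact hW.sum_sub_sum_eigValsDown_le hV _ k
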